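/- Define f(s) = 1 - (Γ(4/3)/(Γ(2/3)Γ(5/3))) · s^{2/3}·[(-1+3s-2s²)/((1-s)^{1/3}(1-s+s²)) + ₂F₁(2/3,1/3;5/3;s)]. Then f satisfies the ODE 2(1 - 6s² + 4s³) f'(s) + 3s(-1 + 2s - 2s² + s³) f''(s) = 0 for s ∈ (0,1). -/

import Mathlib

open scoped Nat

/-- The Gauss hypergeometric function ₂F₁(a,b;c;s) defined by its series (real). -/
noncomputable def hyp2F1 (a b c s : ℝ) : ℝ :=
  ∑' n : ℕ, (ascPochhammer ℝ n).eval a * (ascPochhammer ℝ n).eval b /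
      ((ascPochhammer ℝ n).eval c * (n ! : ℝ)) * s ^ n

/-- The conditional probability (given a tripod set) that a is hit before b. -/
noncomputable def fCond (s : ℝ) : ℝ :=
  1 - Real.Gamma (4/3) / (Real.Gamma (2/3) * Real.Gamma (5/3)) *
    s ^ ((2:ℝ)/3) *
    ((-1 + 3*s - 2*s^2) / ((1 - s) ^ ((1:ℝ)/3) * (1 - s + s^2))
      + hyp2F1 (2/3) (1/3) (5/3) s)

open Real Set
noncomputable def pc (x : ℝ) (n : ℕ) : ℝ := (ascPochhammer ℝ n).eval x
lemma pc_zero (x : ℝ) : pc x 0 = 1 := by simp [pc]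
lemma pc_succ (x : ℝ) (n : ℕ) : pc x (n+1) = pc x n * (x + n) := ascPochhammer_succ_eval n x
lemma pc_pos {x : ℝ} (hx : 0 < x) (n : ℕ) : 0 < pc x n := by
  induction n with
  | zero => simp [pc_zero]
  | succ n ih => rw [pc_succ]; exact mul_pos ih (by positivity)
noncomputable def cc (n : ℕ) : ℝ := pc (1/3) n / n !
noncomputable def ac (n : ℕ) : ℝ :=
  (ascPochhammer ℝ n).eval (2/3) * (ascPochhammer ℝ n).eval (1/3) /
      ((ascPochhammer ℝ n).eval (5/3) * (n ! : ℝ))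
lemma cc_succ (n : ℕ) : cc (n+1) = cc n * ((1/3 + n) / (n+1)) := by
  have hf : (0:ℝ) < (n ! : ℝ) := by positivity
  unfold cc
  rw [pc_succ, Nat.factorial_succ]
  push_cast
  rw [div_mul_div_comm, div_eq_div_iff (by positivity) (by positivity)]
  ring
lemma cc_pos (n : ℕ) : 0 < cc n := div_pos (pc_pos (by norm_num) n) (by positivity)
lemma cc_le_one (n : ℕ) : cc n ≤ 1 := by
  induction n with
  | zero => simp [cc, pc_zero]
  | succ n ih =>
    rw [cc_succ]
    have h1 : ((1:ℝ)/3 + n) / (n+1) ≤ 1 := by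
      rw [div_le_one (by positivity)]; push_cast; linarith
    have h2 : (0:ℝ) ≤ (1/3 + n) / (n+1) := by positivity
    calc cc n * ((1/3 + n) / (n+1)) ≤ 1 * 1 :=
      mul_le_mul ih h1 h2 zero_le_one
    _ = 1 := by ring
lemma pc_key (n : ℕ) : pc (2/3) n * ((n:ℝ) + 2/3) = 2/3 * pc (5/3) n := by
  induction n with
  | zero => simp [pc_zero]
  | succ n ih =>
    rw [pc_succ, pc_succ]
    push_cast
    linear_combination ((n:ℝ) + 1 + 2/3) * ih
lemma ac_eq (n : ℕ) : ac n * ((n:ℝ) + 2/3) = 2/3 * cc n := by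
  have h5 : pc (5/3) n ≠ 0 := (pc_pos (by norm_num) n).ne'
  have hf : (n ! : ℝ) ≠ 0 := Nat.cast_ne_zero.2 n.factorial_ne_zero
  unfold ac cc
  rw [show ((ascPochhammer ℝ n).eval (2/3) : ℝ) = pc (2/3) n from rfl,
    show ((ascPochhammer ℝ n).eval (1/3) : ℝ) = pc (1/3) n from rfl,
    show ((ascPochhammer ℝ n).eval (5/3) : ℝ) = pc (5/3) n from rfl]
  rw [div_mul_eq_mul_div,
    show (2:ℝ)/3 * (pc (1/3) n / ↑n !) = 2/3 * pc (1/3) n / ↑n ! by ring,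
    div_eq_div_iff (mul_ne_zero h5 hf) hf]
  linear_combination (pc (1/3) n * (n ! : ℝ)) * pc_key n
lemma ac_pos (n : ℕ) : 0 < ac n := by
  unfold ac
  have := pc_pos (show (0:ℝ) < 2/3 by norm_num) n
  have := pc_pos (show (0:ℝ) < 1/3 by norm_num) n
  have := pc_pos (show (0:ℝ) < 5/3 by norm_num) n
  have : (0:ℝ) < (n ! : ℝ) := by positivity
  positivity
lemma ac_le_one (n : ℕ) : ac n ≤ 1 := by
  have h := ac_eq n
  have hpos : (0:ℝ) < (n:ℝ) + 2/3 := by positivity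
  nlinarith [cc_le_one n, ac_pos n, cc_pos n]

noncomputable def Bf (t : ℝ) : ℝ := ∑' n, cc n * t ^ n

lemma summable_cc {t : ℝ} (ht : |t| < 1) : Summable (fun n => cc n * t ^ n) := by
  refine Summable.of_norm_bounded (summable_geometric_of_lt_one (abs_nonneg t) ht) fun n => ?_
  rw [norm_mul, norm_pow, Real.norm_eq_abs, Real.norm_eq_abs,
    abs_of_nonneg (cc_pos n).le]
  exact mul_le_of_le_one_left (by positivity) (cc_le_one n)

lemma summable_dcc {r : ℝ} (hr0 : 0 < r) (hr1 : r < 1) :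
    Summable (fun n : ℕ => r⁻¹ * ((n:ℝ) * r ^ n)) := by
  have := summable_pow_mul_geometric_of_norm_lt_one (R := ℝ) 1 (by rwa [Real.norm_eq_abs, abs_of_pos hr0])
  simpa [pow_one] using this.mul_left r⁻¹

lemma dcc_bound {r : ℝ} (hr0 : 0 < r) {y : ℝ} (hy : |y| ≤ r) (n : ℕ) :
    ‖cc n * ((n:ℝ) * y ^ (n-1))‖ ≤ r⁻¹ * ((n:ℝ) * r ^ n) := by
  cases n with
  | zero => simp
  | succ m =>
    have h1 : ‖cc (m+1) * (((m+1:ℕ):ℝ) * y ^ (m+1-1))‖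
        = cc (m+1) * (((m+1:ℕ):ℝ) * |y| ^ m) := by
      rw [norm_mul, norm_mul, norm_pow, Real.norm_eq_abs, Real.norm_eq_abs,
        Real.norm_eq_abs, abs_of_nonneg (cc_pos _).le,
        abs_of_nonneg (by positivity : (0:ℝ) ≤ ((m+1:ℕ):ℝ)), Nat.add_sub_cancel]
    rw [h1]
    have h2 : r⁻¹ * (((m+1:ℕ):ℝ) * r ^ (m+1)) = ((m+1:ℕ):ℝ) * r ^ m := by
      rw [pow_succ]; field_simp
    rw [h2]
    have h3 : |y| ^ m ≤ r ^ m := pow_le_pow_left₀ (abs_nonneg y) hy m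
    have h4 : cc (m+1) * (((m+1:ℕ):ℝ) * |y| ^ m) ≤ 1 * (((m+1:ℕ):ℝ) * r ^ m) := by
      apply mul_le_mul (cc_le_one _) _ (by positivity) zero_le_one
      exact mul_le_mul_of_nonneg_left h3 (by positivity)
    linarith

lemma Bf_hasDerivAt {r : ℝ} (hr0 : 0 < r) (hr1 : r < 1) {y : ℝ} (hy : y ∈ Set.Ioo (-r) r) :
    HasDerivAt Bf (∑' n : ℕ, cc n * ((n:ℝ) * y ^ (n-1))) y := by
  refine hasDerivAt_tsum_of_isPreconnected (summable_dcc hr0 hr1) isOpen_Ioo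
    (convex_Ioo _ _).isPreconnected
    (fun n t _ => (hasDerivAt_pow n t).const_mul (cc n))
    (fun n t ht => dcc_bound hr0 (abs_le.2 ⟨ht.1.le, ht.2.le⟩) n)
    (Set.mem_Ioo.2 ⟨by linarith, hr0⟩)
    (summable_cc (by norm_num)) hy

lemma summable_dcc_at {y : ℝ} (hy : |y| < 1) :
    Summable (fun n : ℕ => cc n * ((n:ℝ) * y ^ (n-1))) := by
  set r := (|y| + 1)/2 with hr
  have hr0 : 0 < r := by positivity
  have hr1 : r < 1 := by rw [hr]; linarith
  exact Summable.of_norm_bounded (summable_dcc hr0 hr1)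
    (fun n => dcc_bound hr0 (by rw [hr]; linarith) n)

lemma summable_ncc {y : ℝ} (hy : |y| < 1) :
    Summable (fun n : ℕ => cc n * ((n:ℝ) * y ^ n)) := by
  have h := (summable_dcc_at hy).mul_left y
  apply h.congr
  intro n
  cases n with
  | zero => simp
  | succ m =>
    show y * (cc (m+1) * (((m+1:ℕ):ℝ) * y ^ (m+1-1))) = _
    rw [Nat.add_sub_cancel, pow_succ]
    push_cast
    ring

lemma cc_rec (n : ℕ) : ((n:ℝ)+1) * cc (n+1) = ((n:ℝ) + 1/3) * cc n := by
  rw [cc_succ]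
  have : ((n:ℝ)+1) ≠ 0 := by positivity
  field_simp
  ring

lemma key_deriv_identity {y : ℝ} (hy : |y| < 1) :
    (1 - y) * (∑' n : ℕ, cc n * ((n:ℝ) * y ^ (n-1))) = 1/3 * Bf y := by
  have hT := summable_dcc_at hy
  have hN := summable_ncc hy
  have hB := summable_cc hy
  have hshift : (∑' n : ℕ, cc n * ((n:ℝ) * y ^ (n-1)))
      = ∑' n : ℕ, cc (n+1) * (((n:ℝ)+1) * y ^ n) := by
    rw [hT.tsum_eq_zero_add]
    push_cast
    simp
  have hyT : y * (∑' n : ℕ, cc n * ((n:ℝ) * y ^ (n-1)))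
      = ∑' n : ℕ, cc n * ((n:ℝ) * y ^ n) := by
    rw [← tsum_mul_left]
    apply tsum_congr
    intro n
    cases n with
    | zero => simp
    | succ m =>
      rw [Nat.add_sub_cancel, pow_succ]
      push_cast
      ring
  have hsub : (1 - y) * (∑' n : ℕ, cc n * ((n:ℝ) * y ^ (n-1)))
      = (∑' n : ℕ, cc (n+1) * (((n:ℝ)+1) * y ^ n)) - ∑' n : ℕ, cc n * ((n:ℝ) * y ^ n) := by
    rw [sub_mul, one_mul, hyT, hshift]
  rw [hsub]
  have hshift_sum : Summable (fun n : ℕ => cc (n+1) * (((n:ℝ)+1) * y ^ n)) := by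
    have := (summable_nat_add_iff 1).2 hT
    apply this.congr
    intro n
    push_cast
    ring
  rw [← hshift_sum.tsum_sub hN]
  unfold Bf
  rw [← tsum_mul_left]
  apply tsum_congr
  intro n
  linear_combination (y^n) * cc_rec n

lemma W_hasDerivAt {r : ℝ} (hr0 : 0 < r) (hr1 : r < 1) {y : ℝ} (hy : y ∈ Set.Ioo (-r) r) :
    HasDerivAt (fun t => (1-t) ^ ((1:ℝ)/3) * Bf t) 0 y := by
  have hy1 : y < 1 := lt_of_lt_of_le hy.2 hr1.le
  have h1y : (0:ℝ) < 1 - y := by linarith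
  have habs : |y| < 1 := abs_lt.2 ⟨by linarith [hy.1, neg_lt_neg hr1], hy1⟩
  have hB := Bf_hasDerivAt hr0 hr1 hy
  have hpow : HasDerivAt (fun t : ℝ => (1-t) ^ ((1:ℝ)/3))
      ((0-1) * ((1:ℝ)/3) * (1-y) ^ ((1:ℝ)/3 - 1)) y :=
    ((hasDerivAt_const y (1:ℝ)).sub (hasDerivAt_id y)).rpow_const (Or.inl h1y.ne')
  have := hpow.mul hB
  refine this.congr_deriv (Eq.symm ?_)
  have hkey := key_deriv_identity habs
  have hsub : (1-y) ^ ((1:ℝ)/3 - 1) = (1-y) ^ ((1:ℝ)/3) / (1-y) := by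
    rw [Real.rpow_sub h1y, Real.rpow_one]
  rw [hsub]
  have hT : (∑' n : ℕ, cc n * ((n:ℝ) * y ^ (n-1))) = 1/3 * Bf y / (1-y) := by
    field_simp at hkey ⊢
    linarith
  rw [hT]
  field_simp
  norm_num

lemma Bf_eq {s : ℝ} (hs : s ∈ Set.Ioo (0:ℝ) 1) : Bf s = (1-s) ^ (-(1:ℝ)/3) := by
  obtain ⟨hs0, hs1⟩ := hs
  set r : ℝ := (1+s)/2 with hrdef
  have hr0 : 0 < r := by positivity
  have hr1 : r < 1 := by rw [hrdef]; linarith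
  have hsr : s < r := by rw [hrdef]; linarith
  have hsub : Set.Icc (0:ℝ) s ⊆ Set.Ioo (-r) r := fun x hx =>
    Set.mem_Ioo.2 ⟨by linarith [hx.1], by linarith [hx.2]⟩
  have hconst := constant_of_has_deriv_right_zero
    (f := fun t => (1-t) ^ ((1:ℝ)/3) * Bf t) (a := 0) (b := s)
    (fun x hx => ((W_hasDerivAt hr0 hr1 (hsub hx)).continuousAt).continuousWithinAt)
    (fun x hx => ((W_hasDerivAt hr0 hr1 (hsub ⟨hx.1, hx.2.le⟩)).hasDerivWithinAt))
    s (Set.mem_Icc.2 ⟨hs0.le, le_refl s⟩)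
  have hB0 : Bf 0 = 1 := by
    unfold Bf
    rw [tsum_eq_single 0 (fun n hn => by simp [zero_pow hn])]
    simp [cc, pc_zero]
  have hconst' : (1-s) ^ ((1:ℝ)/3) * Bf s = 1 := by
    simpa [hB0] using hconst
  have h1s : (0:ℝ) < 1 - s := by linarith
  have hpos : (0:ℝ) < (1-s) ^ ((1:ℝ)/3) := Real.rpow_pos_of_pos h1s _
  have : Bf s = ((1-s) ^ ((1:ℝ)/3))⁻¹ := by
    field_simp
    linarith [hconst']
  rw [this, show (-(1:ℝ)/3) = -((1:ℝ)/3) by norm_num, Real.rpow_neg h1s.le]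

lemma rpow_split {y : ℝ} (hy : 0 < y) (n : ℕ) :
    y ^ ((n:ℝ) + 2/3 - 1) = y ^ n * y ^ (-(1:ℝ)/3) := by
  rw [show ((n:ℝ) + 2/3 - 1) = (n:ℝ) + (-(1:ℝ)/3) by ring, Real.rpow_add hy,
    Real.rpow_natCast]

lemma spart_hasDerivAt {s : ℝ} (hs : s ∈ Set.Ioo (0:ℝ) 1) :
    HasDerivAt (fun t : ℝ => ∑' n : ℕ, ac n * t ^ ((n:ℝ) + 2/3))
      (2/3 * (s ^ (-(1:ℝ)/3) * (1-s) ^ (-(1:ℝ)/3))) s := by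
  obtain ⟨hs0, hs1⟩ := hs
  set δ : ℝ := s/2 with hδdef
  set r : ℝ := (1+s)/2 with hrdef
  have hδ0 : 0 < δ := by positivity
  have hr1 : r < 1 := by rw [hrdef]; linarith
  have hr0 : 0 < r := by positivity
  have hmem : s ∈ Set.Ioo δ r := ⟨by rw [hδdef]; linarith, by rw [hrdef]; linarith⟩
  have hu : Summable (fun n : ℕ => (2/3 * δ ^ (-(1:ℝ)/3)) * r ^ n) :=
    (summable_geometric_of_lt_one hr0.le hr1).mul_left _
  have hder : ∀ (n : ℕ) (y : ℝ), y ∈ Set.Ioo δ r →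
      HasDerivAt (fun t : ℝ => ac n * t ^ ((n:ℝ) + 2/3))
        (ac n * (((n:ℝ) + 2/3) * y ^ ((n:ℝ) + 2/3 - 1))) y := by
    intro n y hy
    exact (Real.hasDerivAt_rpow_const (Or.inl (by linarith [hy.1] : y ≠ 0)
      )).const_mul (ac n)
  have hbound : ∀ (n : ℕ) (y : ℝ), y ∈ Set.Ioo δ r →
      ‖ac n * (((n:ℝ) + 2/3) * y ^ ((n:ℝ) + 2/3 - 1))‖
        ≤ (2/3 * δ ^ (-(1:ℝ)/3)) * r ^ n := by
    intro n y hy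
    have hy0 : 0 < y := lt_trans hδ0 hy.1
    rw [rpow_split hy0]
    have hval : ac n * (((n:ℝ) + 2/3) * (y ^ n * y ^ (-(1:ℝ)/3)))
        = (2/3 * cc n) * (y ^ n * y ^ (-(1:ℝ)/3)) := by
      rw [← mul_assoc, ac_eq n]
    rw [hval, Real.norm_eq_abs, abs_of_nonneg (mul_nonneg
      (mul_nonneg (by norm_num) (cc_pos n).le) (by positivity))]
    have h1 : y ^ n ≤ r ^ n := pow_le_pow_left₀ hy0.le hy.2.le n
    have h2 : y ^ (-(1:ℝ)/3) ≤ δ ^ (-(1:ℝ)/3) :=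
      Real.rpow_le_rpow_of_nonpos hδ0 hy.1.le (by norm_num)
    have h3 : cc n ≤ 1 := cc_le_one n
    have hccpos := cc_pos n
    have hy13 : (0:ℝ) < y ^ (-(1:ℝ)/3) := Real.rpow_pos_of_pos hy0 _
    calc 2/3 * cc n * (y ^ n * y ^ (-(1:ℝ)/3))
        ≤ 2/3 * 1 * (r ^ n * δ ^ (-(1:ℝ)/3)) := by
          apply mul_le_mul (by linarith) _ (by positivity) (by norm_num)
          exact mul_le_mul h1 h2 hy13.le (by positivity)
      _ = (2/3 * δ ^ (-(1:ℝ)/3)) * r ^ n := by ring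
  have hsum0 : Summable (fun n : ℕ => ac n * s ^ ((n:ℝ) + 2/3)) := by
    refine Summable.of_norm_bounded
      ((summable_geometric_of_lt_one hs0.le hs1).mul_left (s ^ ((2:ℝ)/3))) fun n => ?_
    have h1 : s ^ ((n:ℝ) + 2/3) = s ^ n * s ^ ((2:ℝ)/3) := by
      rw [Real.rpow_add hs0, Real.rpow_natCast]
    rw [h1, Real.norm_eq_abs, abs_of_nonneg (mul_nonneg (ac_pos n).le (by positivity))]
    have := ac_le_one n
    have := ac_pos n
    have hsn : (0:ℝ) < s ^ n := by positivity
    have hs23 : (0:ℝ) < s ^ ((2:ℝ)/3) := Real.rpow_pos_of_pos hs0 _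
    calc ac n * (s ^ n * s ^ ((2:ℝ)/3)) ≤ 1 * (s ^ n * s ^ ((2:ℝ)/3)) := by
          apply mul_le_mul_of_nonneg_right (ac_le_one n) (by positivity)
      _ = s ^ ((2:ℝ)/3) * s ^ n := by ring
  have hD := hasDerivAt_tsum_of_isPreconnected hu isOpen_Ioo
    (convex_Ioo _ _).isPreconnected hder hbound hmem hsum0 hmem
  refine hD.congr_deriv (Eq.symm ?_)
  have hterm : ∀ n : ℕ, ac n * (((n:ℝ) + 2/3) * s ^ ((n:ℝ) + 2/3 - 1))
      = (s ^ (-(1:ℝ)/3) * (2/3)) * (cc n * s ^ n) := by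
    intro n
    rw [rpow_split hs0]
    linear_combination (s ^ n * s ^ (-(1:ℝ)/3)) * ac_eq n
  rw [tsum_congr hterm, tsum_mul_left,
    show (∑' n : ℕ, cc n * s ^ n) = Bf s from rfl, Bf_eq ⟨hs0, hs1⟩]
  ring

lemma hyp_eq (t : ℝ) : hyp2F1 (2/3) (1/3) (5/3) t = ∑' n : ℕ, ac n * t ^ n := rfl

lemma part2_hasDerivAt {s : ℝ} (hs : s ∈ Set.Ioo (0:ℝ) 1) :
    HasDerivAt (fun t : ℝ => t ^ ((2:ℝ)/3) * hyp2F1 (2/3) (1/3) (5/3) t)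
      (2/3 * (s ^ (-(1:ℝ)/3) * (1-s) ^ (-(1:ℝ)/3))) s := by
  apply (spart_hasDerivAt hs).congr_of_eventuallyEq
  filter_upwards [Ioo_mem_nhds hs.1 hs.2] with t ht
  rw [hyp_eq, ← tsum_mul_left]
  exact tsum_congr fun n => by
    rw [Real.rpow_add ht.1, Real.rpow_natCast]
    ring

lemma ratsimp {t : ℝ} (ht : t ∈ Set.Ioo (0:ℝ) 1) :
    (-1 + 3*t - 2*t^2) / ((1 - t) ^ ((1:ℝ)/3) * (1 - t + t^2))
      = (1-t) ^ ((2:ℝ)/3) * ((2*t-1) / (1 - t + t^2)) := by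
  have h1t : (0:ℝ) < 1 - t := by linarith [ht.2]
  have hq : (0:ℝ) < 1 - t + t^2 := by nlinarith [ht.1]
  have hY1 : (0:ℝ) < (1-t) ^ ((1:ℝ)/3) := Real.rpow_pos_of_pos h1t _
  have e1 : (1-t) ^ ((1:ℝ)/3) * (1-t) ^ ((2:ℝ)/3) = 1 - t := by
    rw [← Real.rpow_add h1t]; norm_num
  have hnum : -1 + 3*t - 2*t^2 = ((1-t) ^ ((1:ℝ)/3) * (1-t) ^ ((2:ℝ)/3)) * (2*t-1) := by
    rw [e1]; ring
  rw [hnum]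
  field_simp

lemma rpart_hasDerivAt {s : ℝ} (hs : s ∈ Set.Ioo (0:ℝ) 1) :
    HasDerivAt (fun t : ℝ => t ^ ((2:ℝ)/3) *
        ((-1 + 3*t - 2*t^2) / ((1 - t) ^ ((1:ℝ)/3) * (1 - t + t^2))))
      (2/3 * s ^ ((2:ℝ)/3 - 1) * ((1-s) ^ ((2:ℝ)/3) * ((2*s-1)/(1-s+s^2)))
        + s ^ ((2:ℝ)/3) * ((-(2:ℝ)/3) * (1-s) ^ ((2:ℝ)/3 - 1) * ((2*s-1)/(1-s+s^2))
          + (1-s) ^ ((2:ℝ)/3) * ((2*(1-s+s^2) - (2*s-1)*(-1+2*s))/(1-s+s^2)^2))) s := by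
  obtain ⟨hs0, hs1⟩ := hs
  have h1s : (0:ℝ) < 1 - s := by linarith
  have hq : (0:ℝ) < 1 - s + s^2 := by nlinarith
  have hu : HasDerivAt (fun t : ℝ => t ^ ((2:ℝ)/3)) (2/3 * s ^ ((2:ℝ)/3 - 1)) s :=
    Real.hasDerivAt_rpow_const (Or.inl hs0.ne')
  have hv : HasDerivAt (fun t : ℝ => (1-t) ^ ((2:ℝ)/3))
      ((0-1) * ((2:ℝ)/3) * (1-s) ^ ((2:ℝ)/3 - 1)) s :=
    ((hasDerivAt_const s (1:ℝ)).sub (hasDerivAt_id s)).rpow_const (Or.inl h1s.ne')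
  have hnum : HasDerivAt (fun t : ℝ => 2*t-1) 2 s := by
    simpa using ((hasDerivAt_id s).const_mul 2).sub_const 1
  have hden : HasDerivAt (fun t : ℝ => 1 - t + t^2) (-1 + 2*s) s := by
    have h0 := ((hasDerivAt_const s (1:ℝ)).sub (hasDerivAt_id s)).add (hasDerivAt_pow 2 s)
    refine h0.congr_deriv (Eq.symm ?_)
    norm_num
  have hw : HasDerivAt (fun t : ℝ => (2*t-1)/(1-t+t^2))
      ((2*(1-s+s^2) - (2*s-1)*(-1+2*s))/(1-s+s^2)^2) s := hnum.div hden hq.ne'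
  have hB := hu.mul (hv.mul hw)
  have h2 : HasDerivAt (fun t : ℝ => t ^ ((2:ℝ)/3) * ((1-t) ^ ((2:ℝ)/3) * ((2*t-1)/(1-t+t^2))))
      (2/3 * s ^ ((2:ℝ)/3 - 1) * ((1-s) ^ ((2:ℝ)/3) * ((2*s-1)/(1-s+s^2)))
        + s ^ ((2:ℝ)/3) * ((-(2:ℝ)/3) * (1-s) ^ ((2:ℝ)/3 - 1) * ((2*s-1)/(1-s+s^2))
          + (1-s) ^ ((2:ℝ)/3) * ((2*(1-s+s^2) - (2*s-1)*(-1+2*s))/(1-s+s^2)^2))) s := by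
    refine hB.congr_deriv (Eq.symm ?_)
    simp only [Pi.mul_apply]
    ring
  apply h2.congr_of_eventuallyEq
  filter_upwards [Ioo_mem_nhds hs0 hs1] with t ht
  rw [ratsimp ht]

noncomputable def Gc : ℝ := Real.Gamma (4/3) / (Real.Gamma (2/3) * Real.Gamma (5/3))

lemma fCond_hasDerivAt {s : ℝ} (hs : s ∈ Set.Ioo (0:ℝ) 1) :
    HasDerivAt fCond (-3 * Gc * (s ^ ((2:ℝ)/3) * (1-s) ^ ((2:ℝ)/3) / (1-s+s^2)^2)) s := by
  obtain ⟨hs0, hs1⟩ := hs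
  have h1s : (0:ℝ) < 1 - s := by linarith
  have hq : (0:ℝ) < 1 - s + s^2 := by nlinarith
  have h1 := rpart_hasDerivAt ⟨hs0, hs1⟩
  have h2 := part2_hasDerivAt ⟨hs0, hs1⟩
  have hsum := ((h1.add h2).const_mul Gc).const_sub 1
  have hfeq : fCond = fun t : ℝ => 1 - Gc *
      (t ^ ((2:ℝ)/3) * ((-1 + 3*t - 2*t^2) / ((1 - t) ^ ((1:ℝ)/3) * (1 - t + t^2)))
        + t ^ ((2:ℝ)/3) * hyp2F1 (2/3) (1/3) (5/3) t) := by
    funext t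
    unfold fCond Gc
    ring
  rw [hfeq]
  refine hsum.congr_deriv (Eq.symm ?_)
  have e1 : s ^ ((2:ℝ)/3 - 1) = s ^ ((2:ℝ)/3) / s := by
    rw [Real.rpow_sub hs0, Real.rpow_one]
  have e2 : (1-s) ^ ((2:ℝ)/3 - 1) = (1-s) ^ ((2:ℝ)/3) / (1-s) := by
    rw [Real.rpow_sub h1s, Real.rpow_one]
  have e3 : s ^ (-(1:ℝ)/3) = s ^ ((2:ℝ)/3) / s := by
    rw [show (-(1:ℝ)/3) = (2:ℝ)/3 - 1 by norm_num]; exact e1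
  have e4 : (1-s) ^ (-(1:ℝ)/3) = (1-s) ^ ((2:ℝ)/3) / (1-s) := by
    rw [show (-(1:ℝ)/3) = (2:ℝ)/3 - 1 by norm_num]; exact e2
  rw [e1, e2, e3, e4]
  field_simp
  ring

noncomputable def Gfun (t : ℝ) : ℝ :=
  -3 * Gc * (t ^ ((2:ℝ)/3) * (1-t) ^ ((2:ℝ)/3) / (1-t+t^2)^2)

lemma Gfun_hasDerivAt {s : ℝ} (hs : s ∈ Set.Ioo (0:ℝ) 1) :
    HasDerivAt Gfun
      (-3 * Gc * ((2/3 * (s ^ ((2:ℝ)/3)/s) * (1-s) ^ ((2:ℝ)/3)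
          - 2/3 * s ^ ((2:ℝ)/3) * ((1-s) ^ ((2:ℝ)/3)/(1-s))) / (1-s+s^2)^2
        - s ^ ((2:ℝ)/3) * (1-s) ^ ((2:ℝ)/3) * (2*(-1+2*s)) / (1-s+s^2)^3)) s := by
  obtain ⟨hs0, hs1⟩ := hs
  have h1s : (0:ℝ) < 1 - s := by linarith
  have hq : (0:ℝ) < 1 - s + s^2 := by nlinarith
  have hu : HasDerivAt (fun t : ℝ => t ^ ((2:ℝ)/3)) (2/3 * s ^ ((2:ℝ)/3 - 1)) s :=
    Real.hasDerivAt_rpow_const (Or.inl hs0.ne')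
  have hv : HasDerivAt (fun t : ℝ => (1-t) ^ ((2:ℝ)/3))
      ((0-1) * ((2:ℝ)/3) * (1-s) ^ ((2:ℝ)/3 - 1)) s :=
    ((hasDerivAt_const s (1:ℝ)).sub (hasDerivAt_id s)).rpow_const (Or.inl h1s.ne')
  have hden : HasDerivAt (fun t : ℝ => 1 - t + t^2) (-1 + 2*s) s := by
    have h0 := ((hasDerivAt_const s (1:ℝ)).sub (hasDerivAt_id s)).add (hasDerivAt_pow 2 s)
    refine h0.congr_deriv (Eq.symm ?_)
    norm_num
  have hdp := hden.pow 2
  have hn := hu.mul hv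
  have hdiv := hn.div hdp (by positivity : ((1-s+s^2)^2 : ℝ) ≠ 0)
  have hfinal := hdiv.const_mul (-3 * Gc)
  have hGeq : Gfun = fun t : ℝ =>
      -3 * Gc * (t ^ ((2:ℝ)/3) * (1-t) ^ ((2:ℝ)/3) / (1-t+t^2)^2) := rfl
  rw [hGeq]
  refine hfinal.congr_deriv (Eq.symm ?_)
  simp only [Pi.mul_apply, Pi.pow_apply]
  have e1 : s ^ ((2:ℝ)/3 - 1) = s ^ ((2:ℝ)/3) / s := by
    rw [Real.rpow_sub hs0, Real.rpow_one]
  have e2 : (1-s) ^ ((2:ℝ)/3 - 1) = (1-s) ^ ((2:ℝ)/3) / (1-s) := by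
    rw [Real.rpow_sub h1s, Real.rpow_one]
  rw [e1, e2]
  field_simp
  ring

/-- fCond satisfies 2(1-6s²+4s³) f'(s) + 3s(-1+2s-2s²+s³) f''(s) = 0 on (0,1). -/
theorem fCond_ode (s : ℝ) (hs : s ∈ Set.Ioo (0:ℝ) 1) :
    2 * (1 - 6*s^2 + 4*s^3) * deriv fCond s
      + 3 * s * (-1 + 2*s - 2*s^2 + s^3) * deriv (deriv fCond) s = 0 := by
  obtain ⟨hs0, hs1⟩ := hs
  have h1s : (0:ℝ) < 1 - s := by linarith
  have hq : (0:ℝ) < 1 - s + s^2 := by nlinarith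
  have hd1 : deriv fCond s = -3 * Gc * (s ^ ((2:ℝ)/3) * (1-s) ^ ((2:ℝ)/3) / (1-s+s^2)^2) :=
    (fCond_hasDerivAt ⟨hs0, hs1⟩).deriv
  have hev : deriv fCond =ᶠ[nhds s] Gfun := by
    filter_upwards [Ioo_mem_nhds hs0 hs1] with t ht
    exact (fCond_hasDerivAt ht).deriv
  have hd2 : deriv (deriv fCond) s
      = -3 * Gc * ((2/3 * (s ^ ((2:ℝ)/3)/s) * (1-s) ^ ((2:ℝ)/3)
          - 2/3 * s ^ ((2:ℝ)/3) * ((1-s) ^ ((2:ℝ)/3)/(1-s))) / (1-s+s^2)^2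
        - s ^ ((2:ℝ)/3) * (1-s) ^ ((2:ℝ)/3) * (2*(-1+2*s)) / (1-s+s^2)^3) := by
    rw [Filter.EventuallyEq.deriv_eq hev]
    exact (Gfun_hasDerivAt ⟨hs0, hs1⟩).deriv
  rw [hd1, hd2]
  field_simp
  ring
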